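/- arXiv:2410.07533 — 5 statements merged into one kernel-verified Lean document; each statement's English description precedes it below -/
import Mathlib

section
/- Let n ≥ 1, let ℋ be a nonempty convex set of n×n real symmetric positive definite matrices, let η > 0, let T ≥ 1, and let γ̂₁,…,γ̂_T and D₁,…,D_T be n×n real symmetric matrices. Suppose that for each t = 1,…,T the matrix H_t ∈ ℋ maximizes the function H ↦ ⟨H, Σ_{s=1}^{t-1} γ̂_s + Σ_{s=1}^{t} D_s⟩ − G(H)/η over ℋ. Suppose s₁,…,s_T are real numbers such that for every t and every H ∈ ℋ, ⟨H − H_t, γ̂_t⟩ − D_G(H, H_t)/η ≤ s_t. Then for every U ∈ ℋ and every real number m with m ≤ G(H) for all H ∈ ℋ, one has Σ_{t=1}^{T} ⟨U − H_t, γ̂_t⟩ ≤ (G(U) − m)/η − Σ_{t=1}^{T} ⟨U − H_t, D_t⟩ + Σ_{t=1}^{T} s_t. -/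
/-!
Write `F_t(K) = ⟨K, P_t⟩ - G(K)/η` for the objective maximized by `H_t`. Since `G` is convex and
differentiable, the first-order condition at the maximizer `H_t` strengthens to
`F_t(K) + D_G(K, H_t)/η ≤ F_t(H_t)` on `ℋ`. Adding the hypothesis on `s_t` at the same `K`, and
the induction hypothesis at `K = H_t`, an induction on `t` bounds
`⟨K, ∑_{r ≤ t} (γ̂_r + D_r)⟩ - G(K)/η ≤ -m/η + ∑_{r ≤ t} (⟨H_r, γ̂_r + D_r⟩ + s_r)` for all `K ∈ ℋ`;
at `t = T`, `K = U` this is the regret bound.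
The first-order condition comes from the tangent inequality of the concave function `log det`,
applied at `H_t + ε (K - H_t)`, and the limit `ε → 0⁺`.
-/

open Matrix Finset

/-- Inner product of matrices: ⟨A, B⟩ = tr(Aᵀ B). -/
noncomputable def matInner {n : ℕ} (A B : Matrix (Fin n) (Fin n) ℝ) : ℝ := (Aᵀ * B).trace

/-- The log-determinant barrier regularizer G(H) = -log det H. -/
noncomputable def barrierG {n : ℕ} (H : Matrix (Fin n) (Fin n) ℝ) : ℝ := - Real.log H.det

/-- The Bregman divergence of G:
D_G(X, Y) = -log det X + log det Y + tr(Y⁻¹ (X - Y)). -/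
noncomputable def bregmanG {n : ℕ} (X Y : Matrix (Fin n) (Fin n) ℝ) : ℝ :=
  - Real.log X.det + Real.log Y.det + (Y⁻¹ * (X - Y)).trace

section FTRL

variable {E : Type*} [AddCommGroup E] [Module ℝ E] (B : E →ₗ[ℝ] E →ₗ[ℝ] ℝ)
  {ℋ : Set E} {R : E → ℝ} {Bd : E → E → ℝ} {γ D H : ℕ → E} {s : ℕ → ℝ} {m : ℝ} {T : ℕ}

theorem ftrl_potential_le (hHmem : ∀ t ∈ Icc 1 T, H t ∈ ℋ)
    (hopt : ∀ t ∈ Icc 1 T, ∀ K ∈ ℋ,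
      B K (∑ r ∈ Icc 1 (t - 1), γ r + ∑ r ∈ Icc 1 t, D r) - R K + Bd K (H t)
        ≤ B (H t) (∑ r ∈ Icc 1 (t - 1), γ r + ∑ r ∈ Icc 1 t, D r) - R (H t))
    (hs : ∀ t ∈ Icc 1 T, ∀ K ∈ ℋ, B (K - H t) (γ t) - Bd K (H t) ≤ s t)
    (hm : ∀ K ∈ ℋ, m ≤ R K) :
    ∀ t ≤ T, ∀ K ∈ ℋ, B K (∑ r ∈ Icc 1 t, (γ r + D r)) - R K
      ≤ -m + ∑ r ∈ Icc 1 t, (B (H r) (γ r + D r) + s r) := by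
  intro t
  induction t with
  | zero =>
    intro _ K hK
    simpa using hm K hK
  | succ t ih =>
    intro ht K hK
    have htT : t + 1 ∈ Icc 1 T := mem_Icc.mpr ⟨le_add_self, ht⟩
    have hleader : ∑ r ∈ Icc 1 (t + 1 - 1), γ r + ∑ r ∈ Icc 1 (t + 1), D r
        = ∑ r ∈ Icc 1 t, (γ r + D r) + D (t + 1) := by
      rw [Nat.add_sub_cancel, sum_Icc_succ_top le_add_self, sum_add_distrib, add_assoc]
    have hopt_t := hopt (t + 1) htT K hK
    have hs_t := hs (t + 1) htT K hK
    have ih_t := ih (Nat.le_of_succ_le ht) (H (t + 1)) (hHmem _ htT)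
    rw [hleader] at hopt_t
    rw [sum_Icc_succ_top le_add_self, sum_Icc_succ_top le_add_self]
    simp only [map_add, LinearMap.map_sub₂] at hopt_t hs_t ih_t ⊢
    linarith

theorem ftrl_regret_le (hHmem : ∀ t ∈ Icc 1 T, H t ∈ ℋ)
    (hopt : ∀ t ∈ Icc 1 T, ∀ K ∈ ℋ,
      B K (∑ r ∈ Icc 1 (t - 1), γ r + ∑ r ∈ Icc 1 t, D r) - R K + Bd K (H t)
        ≤ B (H t) (∑ r ∈ Icc 1 (t - 1), γ r + ∑ r ∈ Icc 1 t, D r) - R (H t))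
    (hs : ∀ t ∈ Icc 1 T, ∀ K ∈ ℋ, B (K - H t) (γ t) - Bd K (H t) ≤ s t)
    (hm : ∀ K ∈ ℋ, m ≤ R K) {U : E} (hU : U ∈ ℋ) :
    ∑ t ∈ Icc 1 T, B (U - H t) (γ t)
      ≤ R U - m - ∑ t ∈ Icc 1 T, B (U - H t) (D t) + ∑ t ∈ Icc 1 T, s t := by
  have h := ftrl_potential_le B hHmem hopt hs hm T le_rfl U hU
  simp only [map_sum, map_add, LinearMap.map_sub₂, sum_add_distrib, sum_sub_distrib] at h ⊢
  linarith

end FTRL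

namespace Matrix.PosDef

variable {ι : Type*} [Fintype ι] [DecidableEq ι]

theorem log_det_le_trace_sub_card {M : Matrix ι ι ℝ} (hM : M.PosDef) :
    Real.log M.det ≤ M.trace - Fintype.card ι := by
  have hpos := hM.eigenvalues_pos
  rw [hM.isHermitian.det_eq_prod_eigenvalues, hM.isHermitian.trace_eq_sum_eigenvalues]
  simp only [RCLike.ofReal_real_eq_id, id_eq]
  rw [Real.log_prod fun i _ => (hpos i).ne', ← card_univ, ← Nat.smul_one_eq_cast, ← sum_const,
    ← sum_sub_distrib]
  exact sum_le_sum fun i _ => Real.log_le_sub_one_of_pos (hpos i)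

/-- `Y⁻¹ X` is similar to the positive definite matrix `B⁻ᴴ X B⁻¹`, where `Y = Bᴴ B`. -/
theorem log_det_le_log_det_add_trace_inv_mul_sub {X Y : Matrix ι ι ℝ} (hX : X.PosDef)
    (hY : Y.PosDef) : Real.log X.det ≤ Real.log Y.det + (Y⁻¹ * (X - Y)).trace := by
  obtain ⟨B, hB, hYB⟩ : ∃ B : Matrix ι ι ℝ, IsUnit B ∧ Y = star B * B := by
    open scoped MatrixOrder in
    exact CStarAlgebra.isStrictlyPositive_iff_eq_star_mul_self.mp hY.isStrictlyPositive
  have hM : (B * (Y⁻¹ * X) * B⁻¹).PosDef := by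
    have hBB : B * B⁻¹ = 1 := mul_nonsing_inv B ((isUnit_iff_isUnit_det B).mp hB)
    have hconj : B * (Y⁻¹ * X) * B⁻¹ = star B⁻¹ * X * B⁻¹ := by
      simp only [hYB, mul_inv_rev, star_eq_conjTranspose, conjTranspose_nonsing_inv]
      rw [← mul_assoc, ← mul_assoc, hBB, one_mul]
    rw [hconj]
    exact (IsUnit.posDef_star_left_conjugate_iff (isUnit_nonsing_inv_iff.mpr hB)).mpr hX
  have key := hM.log_det_le_trace_sub_card
  rw [det_conj hB, trace_conj hB, det_mul, Real.log_mul hY.inv.det_pos.ne' hX.det_pos.ne',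
    det_nonsing_inv, Ring.inverse_eq_inv', Real.log_inv] at key
  rw [mul_sub, trace_sub, nonsing_inv_mul _ ((isUnit_iff_isUnit_det Y).mp hY.isUnit), trace_one]
  linarith

end Matrix.PosDef

noncomputable def matInnerBilin (n : ℕ) :
    Matrix (Fin n) (Fin n) ℝ →ₗ[ℝ] Matrix (Fin n) (Fin n) ℝ →ₗ[ℝ] ℝ :=
  LinearMap.mk₂ ℝ matInner
    (fun _ _ _ => by simp [matInner, add_mul, trace_add])
    (fun _ _ _ => by simp [matInner, trace_smul])
    (fun _ _ _ => by simp [matInner, mul_add, trace_add])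
    (fun _ _ _ => by simp [matInner, trace_smul])

theorem matInnerBilin_apply {n : ℕ} (A B : Matrix (Fin n) (Fin n) ℝ) :
    matInnerBilin n A B = matInner A B := rfl

section Barrier

open Filter

variable {n : ℕ} {ℋ : Set (Matrix (Fin n) (Fin n) ℝ)} {η : ℝ} {P H K : Matrix (Fin n) (Fin n) ℝ}

/-- The first-order condition at `H`: the gradient of `barrierG` at `H` is `-H⁻ᵀ`. -/
theorem matInner_sub_add_trace_inv_mul_sub_div_nonpos (hconv : Convex ℝ ℋ)
    (hPD : ∀ K ∈ ℋ, K.PosDef) (hη : 0 < η) (hH : H ∈ ℋ)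
    (hmax : IsMaxOn (fun K => matInner K P - barrierG K / η) ℋ H) (hK : K ∈ ℋ) :
    matInner (K - H) P + (H⁻¹ * (K - H)).trace / η ≤ 0 := by
  set Δ := K - H
  set ψ : ℝ → ℝ := fun ε => matInner Δ P + ((H + ε • Δ)⁻¹ * Δ).trace / η
  have hψ_nonpos : ∀ ε ∈ Set.Ioo (0 : ℝ) 1, ψ ε ≤ 0 := by
    intro ε hε
    have hX : H + ε • Δ ∈ ℋ := hconv.add_smul_sub_mem hH hK (Set.Ioo_subset_Icc_self hε)
    have hopt := isMaxOn_iff.mp hmax _ hX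
    have htangent := (hPD H hH).log_det_le_log_det_add_trace_inv_mul_sub (hPD _ hX)
    rw [show H - (H + ε • Δ) = -(ε • Δ) by abel, mul_neg, Matrix.mul_smul, trace_neg,
      trace_smul, smul_eq_mul] at htangent
    have hlin : matInner (H + ε • Δ) P = matInner H P + ε * matInner Δ P := by
      rw [← matInnerBilin_apply, map_add, map_smul]; rfl
    simp only [barrierG, hlin, neg_div] at hopt
    have hdiv := div_le_div_of_nonneg_right (by linarith : Real.log H.det
      - Real.log (H + ε • Δ).det ≤ -(ε * ((H + ε • Δ)⁻¹ * Δ).trace)) hη.le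
    rw [sub_div, neg_div] at hdiv
    have hεψ : ε * ψ ε ≤ 0 := by
      simp only [ψ, mul_add, mul_div_assoc']
      linarith
    exact nonpos_of_mul_nonpos_right hεψ hε.1
  have hψ_cont : ContinuousAt ψ 0 := by
    have hinv : ContinuousAt (fun ε : ℝ => (H + ε • Δ)⁻¹) 0 := by
      refine ContinuousAt.comp (g := Inv.inv) ?_ (by fun_prop)
      simp only [zero_smul, add_zero]
      exact continuousAt_matrix_inv _ (by
        rw [Ring.inverse_eq_inv']; exact continuousAt_inv₀ (hPD H hH).det_pos.ne')
    have hg : Continuous fun M : Matrix (Fin n) (Fin n) ℝ => matInner Δ P + (M * Δ).trace / η :=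
      continuous_const.add ((continuous_id.matrix_mul continuous_const).matrix_trace.div_const η)
    exact hg.continuousAt.comp hinv
  have hψ0 : ψ 0 ≤ 0 := le_of_tendsto (hψ_cont.tendsto.mono_left nhdsWithin_le_nhds)
    (eventually_of_mem (Ioo_mem_nhdsGT one_pos) hψ_nonpos)
  simpa [ψ] using hψ0

theorem add_bregmanG_div_le_of_isMaxOn (hconv : Convex ℝ ℋ) (hPD : ∀ K ∈ ℋ, K.PosDef)
    (hη : 0 < η) (hH : H ∈ ℋ) (hmax : IsMaxOn (fun K => matInner K P - barrierG K / η) ℋ H)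
    (hK : K ∈ ℋ) :
    matInner K P - barrierG K / η + bregmanG K H / η ≤ matInner H P - barrierG H / η := by
  have h := matInner_sub_add_trace_inv_mul_sub_div_nonpos hconv hPD hη hH hmax hK
  rw [← matInnerBilin_apply, LinearMap.map_sub₂] at h
  simp only [matInnerBilin_apply, barrierG, bregmanG, add_div, neg_div] at h ⊢
  linarith

end Barrier

theorem stmt_0_general {n : ℕ}
    (ℋ : Set (Matrix (Fin n) (Fin n) ℝ)) (hconv : Convex ℝ ℋ)
    (hPD : ∀ K ∈ ℋ, K.PosDef)
    (η : ℝ) (hη : 0 < η) (T : ℕ)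
    (γ D H : ℕ → Matrix (Fin n) (Fin n) ℝ)
    (hHmem : ∀ t ∈ Finset.Icc 1 T, H t ∈ ℋ)
    (hmax : ∀ t ∈ Finset.Icc 1 T, ∀ K ∈ ℋ,
      matInner K (∑ s ∈ Finset.Icc 1 (t - 1), γ s + ∑ s ∈ Finset.Icc 1 t, D s)
        - barrierG K / η
      ≤ matInner (H t) (∑ s ∈ Finset.Icc 1 (t - 1), γ s + ∑ s ∈ Finset.Icc 1 t, D s)
        - barrierG (H t) / η)
    (s : ℕ → ℝ)
    (hs : ∀ t ∈ Finset.Icc 1 T, ∀ K ∈ ℋ,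
      matInner (K - H t) (γ t) - bregmanG K (H t) / η ≤ s t)
    (U : Matrix (Fin n) (Fin n) ℝ) (hU : U ∈ ℋ)
    (m : ℝ) (hm : ∀ K ∈ ℋ, m ≤ barrierG K) :
    ∑ t ∈ Finset.Icc 1 T, matInner (U - H t) (γ t)
      ≤ (barrierG U - m) / η
        - ∑ t ∈ Finset.Icc 1 T, matInner (U - H t) (D t)
        + ∑ t ∈ Finset.Icc 1 T, s t := by
  have hm_div : ∀ K ∈ ℋ, m / η ≤ barrierG K / η :=
    fun K hK => div_le_div_of_nonneg_right (hm K hK) hη.le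
  rw [sub_div]
  exact ftrl_regret_le (matInnerBilin n) (Bd := fun K H => bregmanG K H / η) hHmem
    (fun t ht K hK => add_bregmanG_div_le_of_isMaxOn hconv hPD hη (hHmem t ht) (hmax t ht) hK)
    hs hm_div hU

theorem stmt_0 {n : ℕ} (hn : 1 ≤ n)
    (ℋ : Set (Matrix (Fin n) (Fin n) ℝ)) (hne : ℋ.Nonempty) (hconv : Convex ℝ ℋ)
    (hPD : ∀ K ∈ ℋ, K.PosDef) (hSymH : ∀ K ∈ ℋ, K.IsSymm)
    (η : ℝ) (hη : 0 < η) (T : ℕ) (hT : 1 ≤ T)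
    (γ D H : ℕ → Matrix (Fin n) (Fin n) ℝ)
    (hγsym : ∀ t ∈ Finset.Icc 1 T, (γ t).IsSymm)
    (hDsym : ∀ t ∈ Finset.Icc 1 T, (D t).IsSymm)
    (hHmem : ∀ t ∈ Finset.Icc 1 T, H t ∈ ℋ)
    (hmax : ∀ t ∈ Finset.Icc 1 T, ∀ K ∈ ℋ,
      matInner K (∑ s ∈ Finset.Icc 1 (t - 1), γ s + ∑ s ∈ Finset.Icc 1 t, D s)
        - barrierG K / η
      ≤ matInner (H t) (∑ s ∈ Finset.Icc 1 (t - 1), γ s + ∑ s ∈ Finset.Icc 1 t, D s)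
        - barrierG (H t) / η)
    (s : ℕ → ℝ)
    (hs : ∀ t ∈ Finset.Icc 1 T, ∀ K ∈ ℋ,
      matInner (K - H t) (γ t) - bregmanG K (H t) / η ≤ s t)
    (U : Matrix (Fin n) (Fin n) ℝ) (hU : U ∈ ℋ)
    (m : ℝ) (hm : ∀ K ∈ ℋ, m ≤ barrierG K) :
    ∑ t ∈ Finset.Icc 1 T, matInner (U - H t) (γ t)
      ≤ (barrierG U - m) / η
        - ∑ t ∈ Finset.Icc 1 T, matInner (U - H t) (D t)
        + ∑ t ∈ Finset.Icc 1 T, s t :=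
  stmt_0_general ℋ hconv hPD η hη T γ D H hHmem hmax s hs U hU m hm
end

section
/- Let n ≥ 1, let ℋ be a nonempty convex set of n×n real symmetric positive definite matrices, let η > 0, let T ≥ 1, and let γ̂₁,…,γ̂_T and D₁,…,D_T be n×n real symmetric matrices. Suppose that for each t = 1,…,T the matrix H_t ∈ ℋ maximizes the function H ↦ ⟨H, Σ_{s=1}^{t-1} (γ̂_s + D_s)⟩ − G(H)/η over ℋ. Suppose s₁,…,s_T are real numbers such that for every t and every H ∈ ℋ, ⟨H − H_t, γ̂_t + D_t⟩ − D_G(H, H_t)/η ≤ s_t. Then for every U ∈ ℋ and every real number m with m ≤ G(H) for all H ∈ ℋ, one has Σ_{t=1}^{T} ⟨U − H_t, γ̂_t⟩ ≤ (G(U) − m)/η − Σ_{t=1}^{T} ⟨U − H_t, D_t⟩ + Σ_{t=1}^{T} s_t. -/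
open Matrix Finset

/-!
Be-the-leader argument for follow-the-regularized-leader. Write `Φ_L(K) = ⟨K, L⟩ - G(K)/η`.
Since `d/dr log det (A + r E) = tr (A⁻¹ E)` at `r = 0`, the first-order optimality of `H_t` for
`Φ_{L_{t-1}}` on the convex set `ℋ` gives `Φ_{L_{t-1}}(K) - Φ_{L_{t-1}}(H_t) ≤ -D_G(K, H_t)/η`, hence
`Φ_{L_t}(K) ≤ Φ_{L_{t-1}}(H_t) + ⟨H_t, g_t⟩ + s_t` for all `K ∈ ℋ`, where `g_t = γ̂_t + D_t`.
Inducting from `Φ_0 = -G/η ≤ -m/η` and taking `K = U` bounds the regret against the losses `g_t`;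
splitting `g_t` gives the claim.
-/

section Determinant

variable {𝕜 : Type*} [NontriviallyNormedField 𝕜] {ι : Type*} [Fintype ι] [DecidableEq ι]

theorem hasDerivAt_det_one_add_smul (M : Matrix ι ι 𝕜) :
    HasDerivAt (fun r : 𝕜 => (1 + r • M).det) M.trace 0 := by
  have h := (det (1 + (Polynomial.X : Polynomial 𝕜) • M.map Polynomial.C)).hasDerivAt 0
  rw [derivative_det_one_add_X_smul] at h
  convert h using 1
  ext r
  simp [eval_det, ← smul_eq_mul_diagonal]

theorem hasDerivAt_det_add_smul {A : Matrix ι ι 𝕜} (hA : IsUnit A.det) (E : Matrix ι ι 𝕜) :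
    HasDerivAt (fun r : 𝕜 => (A + r • E).det) (A.det * (A⁻¹ * E).trace) 0 := by
  have hfac : ∀ r : 𝕜, A + r • E = A * (1 + r • (A⁻¹ * E)) := fun r => by
    rw [Matrix.mul_add, Matrix.mul_one, Matrix.mul_smul, ← Matrix.mul_assoc,
      Matrix.mul_nonsing_inv A hA, Matrix.one_mul]
  simpa only [hfac, det_mul] using (hasDerivAt_det_one_add_smul (A⁻¹ * E)).const_mul A.det

end Determinant

theorem hasDerivAt_log_det_add_smul {ι : Type*} [Fintype ι] [DecidableEq ι]
    {A : Matrix ι ι ℝ} (hA : A.det ≠ 0) (E : Matrix ι ι ℝ) :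
    HasDerivAt (fun r : ℝ => Real.log (A + r • E).det) (A⁻¹ * E).trace 0 := by
  have h := (Real.hasDerivAt_log (by simpa using hA)).comp 0 (hasDerivAt_det_add_smul hA.isUnit E)
  simpa [Function.comp_def, inv_mul_cancel_left₀ hA] using h

theorem IsMaxOn.hasDerivAt_segment_nonpos {E : Type*} [AddCommGroup E] [Module ℝ E]
    {s : Set E} (hs : Convex ℝ s) {f : E → ℝ} {a x : E} (hmax : IsMaxOn f s a) (ha : a ∈ s)
    (hx : x ∈ s) {c : ℝ} (hf : HasDerivAt (fun r : ℝ => f (a + r • (x - a))) c 0) : c ≤ 0 := by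
  have hloc : IsLocalMaxOn (fun r : ℝ => f (a + r • (x - a))) (Set.Icc 0 1) 0 := by
    refine IsMaxOn.localize fun r hr => ?_
    simpa using hmax (hs.add_smul_sub_mem ha hx hr)
  have hcone : (1 : ℝ) ∈ posTangentConeAt (Set.Icc (0 : ℝ) 1) 0 :=
    mem_posTangentConeAt_of_segment_subset (by simp [segment_eq_Icc])
  simpa using hloc.hasFDerivWithinAt_nonpos hf.hasFDerivAt.hasFDerivWithinAt hcone

section Bilinear

variable {n : ℕ}

theorem matInner_add_left (A B C : Matrix (Fin n) (Fin n) ℝ) :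
    matInner (A + B) C = matInner A C + matInner B C := by
  simp [matInner, Matrix.add_mul]

theorem matInner_sub_left (A B C : Matrix (Fin n) (Fin n) ℝ) :
    matInner (A - B) C = matInner A C - matInner B C := by
  simp [matInner, Matrix.sub_mul]

theorem matInner_smul_left (r : ℝ) (A C : Matrix (Fin n) (Fin n) ℝ) :
    matInner (r • A) C = r * matInner A C := by
  simp [matInner]

theorem matInner_add_right (A B C : Matrix (Fin n) (Fin n) ℝ) :
    matInner A (B + C) = matInner A B + matInner A C := by
  simp [matInner, Matrix.mul_add]

theorem matInner_sum_right {ι : Type*} (A : Matrix (Fin n) (Fin n) ℝ) (F : Finset ι)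
    (f : ι → Matrix (Fin n) (Fin n) ℝ) :
    matInner A (∑ i ∈ F, f i) = ∑ i ∈ F, matInner A (f i) := by
  simp [matInner, Finset.mul_sum, Matrix.trace_sum]

theorem matInner_zero_right (A : Matrix (Fin n) (Fin n) ℝ) : matInner A 0 = 0 := by
  simp [matInner]

end Bilinear

section FTRL

variable {n : ℕ} {ℋ : Set (Matrix (Fin n) (Fin n) ℝ)} {η : ℝ}

noncomputable def ftrlObjective (η : ℝ) (L K : Matrix (Fin n) (Fin n) ℝ) : ℝ :=
  matInner K L - barrierG K / η

theorem bregmanG_eq (K A : Matrix (Fin n) (Fin n) ℝ) :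
    bregmanG K A = barrierG K - barrierG A + (A⁻¹ * (K - A)).trace := by
  simp only [bregmanG, barrierG]
  ring

theorem hasDerivAt_ftrlObjective_add_smul {A : Matrix (Fin n) (Fin n) ℝ} (hA : A.det ≠ 0)
    (L E : Matrix (Fin n) (Fin n) ℝ) :
    HasDerivAt (fun r : ℝ => ftrlObjective η L (A + r • E))
      (matInner E L + (A⁻¹ * E).trace / η) 0 := by
  have hlin : HasDerivAt (fun r : ℝ => matInner (A + r • E) L) (matInner E L) 0 := by
    simp only [matInner_add_left, matInner_smul_left]
    simpa using ((hasDerivAt_id (0 : ℝ)).mul_const (matInner E L)).const_add (matInner A L)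
  have hbarrier : HasDerivAt (fun r : ℝ => barrierG (A + r • E) / η) (-(A⁻¹ * E).trace / η) 0 :=
    (hasDerivAt_log_det_add_smul hA E).neg.div_const η
  exact (hlin.sub hbarrier).congr_deriv (by ring)

theorem ftrl_first_order_condition (hconv : Convex ℝ ℋ) {L A K : Matrix (Fin n) (Fin n) ℝ}
    (hA : A.det ≠ 0) (hAmem : A ∈ ℋ)
    (hmax : IsMaxOn (ftrlObjective η L) ℋ A) (hK : K ∈ ℋ) :
    matInner (K - A) L + (A⁻¹ * (K - A)).trace / η ≤ 0 :=
  hmax.hasDerivAt_segment_nonpos hconv hAmem hK (hasDerivAt_ftrlObjective_add_smul hA L _)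

theorem ftrlObjective_add_le_of_isMaxOn (hconv : Convex ℝ ℋ) {L A K : Matrix (Fin n) (Fin n) ℝ}
    (hA : A.det ≠ 0) (hAmem : A ∈ ℋ)
    (hmax : IsMaxOn (ftrlObjective η L) ℋ A) (hK : K ∈ ℋ)
    (g : Matrix (Fin n) (Fin n) ℝ) :
    ftrlObjective η (L + g) K
      ≤ ftrlObjective η L A + matInner A g + (matInner (K - A) g - bregmanG K A / η) := by
  have hfoc := ftrl_first_order_condition hconv hA hAmem hmax hK
  rw [matInner_sub_left] at hfoc
  rw [ftrlObjective, ftrlObjective, bregmanG_eq, add_div, sub_div, matInner_sub_left,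
    matInner_add_right]
  linarith

theorem ftrl_potential_le_s1 (hconv : Convex ℝ ℋ) (hdet : ∀ K ∈ ℋ, K.det ≠ 0) (hη : 0 < η)
    {T : ℕ} {g H : ℕ → Matrix (Fin n) (Fin n) ℝ} {s : ℕ → ℝ} {m : ℝ}
    (hHmem : ∀ t ∈ Icc 1 T, H t ∈ ℋ)
    (hmax : ∀ t ∈ Icc 1 T,
      IsMaxOn (ftrlObjective η (∑ τ ∈ Icc 1 (t - 1), g τ)) ℋ (H t))
    (hs : ∀ t ∈ Icc 1 T, ∀ K ∈ ℋ, matInner (K - H t) (g t) - bregmanG K (H t) / η ≤ s t)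
    (hm : ∀ K ∈ ℋ, m ≤ barrierG K) :
    ∀ t ≤ T, ∀ K ∈ ℋ, ftrlObjective η (∑ τ ∈ Icc 1 t, g τ) K
      ≤ -(m / η) + ∑ τ ∈ Icc 1 t, (matInner (H τ) (g τ) + s τ) := by
  intro t
  induction t with
  | zero =>
    intro _ K hK
    simpa [ftrlObjective, matInner_zero_right] using div_le_div_of_nonneg_right (hm K hK) hη.le
  | succ t ih =>
    intro ht K hK
    have htT : t + 1 ∈ Icc 1 T := mem_Icc.mpr ⟨by omega, ht⟩
    have hmax' := hmax (t + 1) htT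
    rw [Nat.add_sub_cancel] at hmax'
    have hHt := hHmem (t + 1) htT
    have hstep := ftrlObjective_add_le_of_isMaxOn hconv (hdet _ hHt) hHt hmax' hK (g (t + 1))
    have hprev := ih (by omega) (H (t + 1)) hHt
    rw [sum_Icc_succ_top (by omega), sum_Icc_succ_top (by omega)]
    linarith [hs (t + 1) htT K hK]

theorem ftrl_regret_le_s1 (hconv : Convex ℝ ℋ) (hdet : ∀ K ∈ ℋ, K.det ≠ 0) (hη : 0 < η)
    {T : ℕ} {g H : ℕ → Matrix (Fin n) (Fin n) ℝ} {s : ℕ → ℝ} {m : ℝ}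
    (hHmem : ∀ t ∈ Icc 1 T, H t ∈ ℋ)
    (hmax : ∀ t ∈ Icc 1 T,
      IsMaxOn (ftrlObjective η (∑ τ ∈ Icc 1 (t - 1), g τ)) ℋ (H t))
    (hs : ∀ t ∈ Icc 1 T, ∀ K ∈ ℋ, matInner (K - H t) (g t) - bregmanG K (H t) / η ≤ s t)
    (hm : ∀ K ∈ ℋ, m ≤ barrierG K) {U : Matrix (Fin n) (Fin n) ℝ} (hU : U ∈ ℋ) :
    ∑ t ∈ Icc 1 T, matInner (U - H t) (g t) ≤ (barrierG U - m) / η + ∑ t ∈ Icc 1 T, s t := by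
  have h := ftrl_potential_le_s1 hconv hdet hη hHmem hmax hs hm T le_rfl U hU
  simp only [ftrlObjective, matInner_sum_right, matInner_sub_left, sum_sub_distrib, sum_add_distrib] at h ⊢
  rw [sub_div]
  linarith

end FTRL

theorem stmt_1_general {n : ℕ}
    (ℋ : Set (Matrix (Fin n) (Fin n) ℝ)) (hconv : Convex ℝ ℋ)
    (hPD : ∀ K ∈ ℋ, K.PosDef)
    (η : ℝ) (hη : 0 < η) (T : ℕ)
    (γ D H : ℕ → Matrix (Fin n) (Fin n) ℝ)
    (hHmem : ∀ t ∈ Finset.Icc 1 T, H t ∈ ℋ)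
    (hmax : ∀ t ∈ Finset.Icc 1 T, ∀ K ∈ ℋ,
      matInner K (∑ s ∈ Finset.Icc 1 (t - 1), (γ s + D s))
        - barrierG K / η
      ≤ matInner (H t) (∑ s ∈ Finset.Icc 1 (t - 1), (γ s + D s))
        - barrierG (H t) / η)
    (s : ℕ → ℝ)
    (hs : ∀ t ∈ Finset.Icc 1 T, ∀ K ∈ ℋ,
      matInner (K - H t) (γ t + D t) - bregmanG K (H t) / η ≤ s t)
    (U : Matrix (Fin n) (Fin n) ℝ) (hU : U ∈ ℋ)
    (m : ℝ) (hm : ∀ K ∈ ℋ, m ≤ barrierG K) :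
    ∑ t ∈ Finset.Icc 1 T, matInner (U - H t) (γ t)
      ≤ (barrierG U - m) / η
        - ∑ t ∈ Finset.Icc 1 T, matInner (U - H t) (D t)
        + ∑ t ∈ Finset.Icc 1 T, s t := by
  have hregret := ftrl_regret_le_s1 hconv (fun K hK => (hPD K hK).det_pos.ne') hη hHmem hmax hs hm hU
  simp only [matInner_add_right, sum_add_distrib] at hregret
  linarith

theorem stmt_1 {n : ℕ} (hn : 1 ≤ n)
    (ℋ : Set (Matrix (Fin n) (Fin n) ℝ)) (hne : ℋ.Nonempty) (hconv : Convex ℝ ℋ)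
    (hPD : ∀ K ∈ ℋ, K.PosDef) (hSymH : ∀ K ∈ ℋ, K.IsSymm)
    (η : ℝ) (hη : 0 < η) (T : ℕ) (hT : 1 ≤ T)
    (γ D H : ℕ → Matrix (Fin n) (Fin n) ℝ)
    (hγsym : ∀ t ∈ Finset.Icc 1 T, (γ t).IsSymm)
    (hDsym : ∀ t ∈ Finset.Icc 1 T, (D t).IsSymm)
    (hHmem : ∀ t ∈ Finset.Icc 1 T, H t ∈ ℋ)
    (hmax : ∀ t ∈ Finset.Icc 1 T, ∀ K ∈ ℋ,
      matInner K (∑ s ∈ Finset.Icc 1 (t - 1), (γ s + D s))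
        - barrierG K / η
      ≤ matInner (H t) (∑ s ∈ Finset.Icc 1 (t - 1), (γ s + D s))
        - barrierG (H t) / η)
    (s : ℕ → ℝ)
    (hs : ∀ t ∈ Finset.Icc 1 T, ∀ K ∈ ℋ,
      matInner (K - H t) (γ t + D t) - bregmanG K (H t) / η ≤ s t)
    (U : Matrix (Fin n) (Fin n) ℝ) (hU : U ∈ ℋ)
    (m : ℝ) (hm : ∀ K ∈ ℋ, m ≤ barrierG K) :
    ∑ t ∈ Finset.Icc 1 T, matInner (U - H t) (γ t)
      ≤ (barrierG U - m) / η
        - ∑ t ∈ Finset.Icc 1 T, matInner (U - H t) (D t)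
        + ∑ t ∈ Finset.Icc 1 T, s t :=
  stmt_1_general ℋ hconv hPD η hη T γ D H hHmem hmax s hs U hU m hm
end

section
/- Let B and Σ be n×n real symmetric positive definite matrices, let B^{1/2} denote the positive definite square root of B, and suppose B^{-1/2} Σ⁻¹ B^{-1/2} = Σ_{i=1}^{n} λᵢ vᵢvᵢᵀ, where λ₁,…,λₙ > 0 and v₁,…,vₙ is an orthonormal basis of ℝⁿ. Define B' = B^{1/2} (Σ_{i=1}^{n} max{λᵢ, 1} vᵢvᵢᵀ) B^{1/2}. Then B' ⪰ B and B' ⪰ Σ⁻¹. -/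
/-!
Conjugating by `B^{1/2}` turns both comparisons into comparisons of matrices diagonal in the
orthonormal basis `vᵢ`: `B = B^{1/2} (∑ vᵢvᵢᵀ) B^{1/2}` and `Σ⁻¹ = B^{1/2} (∑ λᵢ vᵢvᵢᵀ) B^{1/2}`.
Since `max λᵢ 1` dominates both `1` and `λᵢ`, the differences are nonnegative combinations of
the projections `vᵢvᵢᵀ`, and congruence by the symmetric `B^{1/2}` preserves semidefiniteness.
-/

open Matrix

namespace Matrix

variable {κ n R : Type*} [Fintype κ] [Fintype n]

theorem sum_vecMulVec_self_eq_one_of_orthonormal [DecidableEq n] [CommRing R] {v : n → n → R}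
    (hv : ∀ i j, v i ⬝ᵥ v j = if i = j then 1 else 0) :
    ∑ i, vecMulVec (v i) (v i) = 1 := by
  have hrows : of v * (of v)ᵀ = 1 := by
    ext i j
    simp [mul_apply, one_apply, ← hv i j, dotProduct]
  rw [← mul_eq_one_comm.mp hrows]
  ext j k
  simp [mul_apply, sum_apply, vecMulVec_apply]

variable [CommRing R] [PartialOrder R] [StarRing R]

theorem PosSemidef.mul_sub_mul_mul_of_isHermitian {D E P : Matrix n n R}
    (h : (D - E).PosSemidef) (hP : P.IsHermitian) :
    (P * D * P - P * E * P).PosSemidef := by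
  simpa only [Matrix.mul_sub, Matrix.sub_mul, hP.eq] using h.mul_mul_conjTranspose_same P

variable [TrivialStar R] [StarOrderedRing R]

theorem posSemidef_sum_smul_vecMulVec_self {c : κ → R} (hc : ∀ i, 0 ≤ c i) (v : κ → n → R) :
    (∑ i, c i • vecMulVec (v i) (v i)).PosSemidef :=
  posSemidef_sum _ fun i _ => by
    simpa using (posSemidef_vecMulVec_self_star (v i)).smul (hc i)

theorem posSemidef_sum_smul_vecMulVec_self_sub {c d : κ → R} (h : ∀ i, d i ≤ c i)
    (v : κ → n → R) :
    (∑ i, c i • vecMulVec (v i) (v i) - ∑ i, d i • vecMulVec (v i) (v i)).PosSemidef := by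
  simpa only [← Finset.sum_sub_distrib, ← sub_smul] using
    posSemidef_sum_smul_vecMulVec_self (fun i => sub_nonneg.mpr (h i)) v

end Matrix

theorem stmt_3_general {n : ℕ}
    (B S sqB : Matrix (Fin n) (Fin n) ℝ)
    (hsqB : sqB.PosDef) (hsq : sqB * sqB = B)
    (lam : Fin n → ℝ)
    (v : Fin n → (Fin n → ℝ))
    (horth : ∀ i j, v i ⬝ᵥ v j = if i = j then (1 : ℝ) else 0)
    (hdecomp : sqB⁻¹ * S⁻¹ * sqB⁻¹ = ∑ i, lam i • vecMulVec (v i) (v i))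
    (B' : Matrix (Fin n) (Fin n) ℝ)
    (hB' : B' = sqB * (∑ i, max (lam i) 1 • vecMulVec (v i) (v i)) * sqB) :
    (B' - B).PosSemidef ∧ (B' - S⁻¹).PosSemidef := by
  have hdet : IsUnit sqB.det := hsqB.det_pos.ne'.isUnit
  have hB_eq : B = sqB * (∑ i, (1 : ℝ) • vecMulVec (v i) (v i)) * sqB := by
    simp only [one_smul, sum_vecMulVec_self_eq_one_of_orthonormal horth, Matrix.mul_one, hsq]
  have hS_eq : S⁻¹ = sqB * (∑ i, lam i • vecMulVec (v i) (v i)) * sqB := by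
    rw [← hdecomp, Matrix.mul_assoc, Matrix.nonsing_inv_mul_cancel_right (h := hdet),
      ← Matrix.mul_assoc, Matrix.mul_nonsing_inv _ hdet, Matrix.one_mul]
  rw [hB', hB_eq, hS_eq]
  exact ⟨(posSemidef_sum_smul_vecMulVec_self_sub (fun i => le_max_right _ _) v)
      |>.mul_sub_mul_mul_of_isHermitian hsqB.isHermitian,
    (posSemidef_sum_smul_vecMulVec_self_sub (fun i => le_max_left _ _) v)
      |>.mul_sub_mul_mul_of_isHermitian hsqB.isHermitian⟩

theorem stmt_3 {n : ℕ}
    (B S sqB : Matrix (Fin n) (Fin n) ℝ)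
    (hB : B.PosDef) (hS : S.PosDef)
    (hsqB : sqB.PosDef) (hsq : sqB * sqB = B)
    (lam : Fin n → ℝ) (hlam : ∀ i, 0 < lam i)
    (v : Fin n → (Fin n → ℝ))
    (horth : ∀ i j, v i ⬝ᵥ v j = if i = j then (1 : ℝ) else 0)
    (hdecomp : sqB⁻¹ * S⁻¹ * sqB⁻¹ = ∑ i, lam i • vecMulVec (v i) (v i))
    (B' : Matrix (Fin n) (Fin n) ℝ)
    (hB' : B' = sqB * (∑ i, max (lam i) 1 • vecMulVec (v i) (v i)) * sqB) :
    (B' - B).PosSemidef ∧ (B' - S⁻¹).PosSemidef :=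
  stmt_3_general B S sqB hsqB hsq lam v horth hdecomp B' hB'
end

section
/- Let B and Σ be n×n real symmetric positive definite matrices, let B^{1/2} denote the positive definite square root of B, and suppose B^{-1/2} Σ⁻¹ B^{-1/2} = Σ_{i=1}^{n} λᵢ vᵢvᵢᵀ, where λ₁,…,λₙ > 0 and v₁,…,vₙ is an orthonormal basis of ℝⁿ. Define B' = B^{1/2} (Σ_{i=1}^{n} max{λᵢ, 1} vᵢvᵢᵀ) B^{1/2}. Then tr(Σ(B' − B)) = Σ_{i=1}^{n} max{1 − 1/λᵢ, 0}. -/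
open Matrix

/-!
Write `P = ∑ λᵢ vᵢvᵢᵀ = B^{-1/2} Σ⁻¹ B^{-1/2}`. Inverting gives `B^{1/2} Σ B^{1/2} = ∑ λᵢ⁻¹ vᵢvᵢᵀ`,
and `B' - B = B^{1/2} (∑ (max λᵢ 1 - 1) vᵢvᵢᵀ) B^{1/2}` because `∑ vᵢvᵢᵀ = 1`. By cyclicity,
`tr (Σ (B' - B)) = tr ((∑ (max λᵢ 1 - 1) vᵢvᵢᵀ) (∑ λᵢ⁻¹ vᵢvᵢᵀ)) = ∑ (max λᵢ 1 - 1) / λᵢ`,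
and `(max λ 1 - 1) / λ = max (1 - 1/λ) 0`.
-/

namespace Matrix

section SpectralSum

variable {ι R : Type*} [Fintype ι] [CommRing R]

def spectralSum (v : ι → ι → R) (f : ι → R) : Matrix ι ι R :=
  ∑ i, f i • vecMulVec (v i) (v i)

variable {v : ι → ι → R}

theorem spectralSum_sub (f g : ι → R) :
    spectralSum v (f - g) = spectralSum v f - spectralSum v g := by
  simp only [spectralSum, Pi.sub_apply, sub_smul, Finset.sum_sub_distrib]

variable [DecidableEq ι]

theorem sum_vecMulVec_of_orthonormal
    (horth : ∀ i j, v i ⬝ᵥ v j = if i = j then (1 : R) else 0) :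
    ∑ i, vecMulVec (v i) (v i) = 1 := by
  have hrows : of v * (of v)ᵀ = 1 := by
    ext i j
    simpa [mul_apply, dotProduct, one_apply] using horth i j
  -- a square matrix with orthonormal rows also has orthonormal columns
  ext k l
  simpa [Matrix.sum_apply, mul_apply, vecMulVec_apply, mul_comm] using
    congrFun (congrFun ((mul_eq_one_comm.mp hrows : (of v)ᵀ * of v = 1)) k) l

theorem spectralSum_one
    (horth : ∀ i j, v i ⬝ᵥ v j = if i = j then (1 : R) else 0) : spectralSum v 1 = 1 := by
  simpa [spectralSum] using sum_vecMulVec_of_orthonormal horth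

theorem spectralSum_mul_spectralSum
    (horth : ∀ i j, v i ⬝ᵥ v j = if i = j then (1 : R) else 0) (f g : ι → R) :
    spectralSum v f * spectralSum v g = spectralSum v (f * g) := by
  simp only [spectralSum, Finset.sum_mul, Finset.mul_sum, smul_mul_smul_comm,
    vecMulVec_mul_vecMulVec, horth]
  simp [ite_smul, apply_ite (vecMulVec _), smul_ite]

theorem trace_spectralSum
    (horth : ∀ i j, v i ⬝ᵥ v j = if i = j then (1 : R) else 0) (f : ι → R) :
    (spectralSum v f).trace = ∑ i, f i := by
  simp [spectralSum, trace_sum, trace_vecMulVec, horth]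

end SpectralSum

theorem inv_spectralSum {ι K : Type*} [Fintype ι] [DecidableEq ι] [Field K] {v : ι → ι → K}
    (horth : ∀ i j, v i ⬝ᵥ v j = if i = j then (1 : K) else 0) {f : ι → K}
    (hf : ∀ i, f i ≠ 0) : (spectralSum v f)⁻¹ = spectralSum v f⁻¹ := by
  refine inv_eq_right_inv ?_
  have hff : f * f⁻¹ = 1 := funext fun i => mul_inv_cancel₀ (hf i)
  rw [spectralSum_mul_spectralSum horth, hff, spectralSum_one horth]

end Matrix

theorem max_sub_one_mul_inv {K : Type*} [Field K] [LinearOrder K] [IsStrictOrderedRing K]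
    {a : K} (ha : 0 < a) : (max a 1 - 1) * a⁻¹ = max (1 - 1 / a) 0 := by
  rw [← max_sub_sub_right, sub_self, max_mul_of_nonneg _ _ (inv_nonneg.2 ha.le), zero_mul, sub_mul,
    mul_inv_cancel₀ ha.ne', one_mul, one_div]

theorem stmt_5_general {n : ℕ}
    (B S sqB : Matrix (Fin n) (Fin n) ℝ)
    (hS : S.PosDef)
    (hsqB : sqB.PosDef) (hsq : sqB * sqB = B)
    (lam : Fin n → ℝ) (hlam : ∀ i, 0 < lam i)
    (v : Fin n → (Fin n → ℝ))
    (horth : ∀ i j, v i ⬝ᵥ v j = if i = j then (1 : ℝ) else 0)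
    (hdecomp : sqB⁻¹ * S⁻¹ * sqB⁻¹ = ∑ i, lam i • vecMulVec (v i) (v i))
    (B' : Matrix (Fin n) (Fin n) ℝ)
    (hB' : B' = sqB * (∑ i, max (lam i) 1 • vecMulVec (v i) (v i)) * sqB) :
    (S * (B' - B)).trace = ∑ i, max (1 - 1 / lam i) 0 := by
  set M := spectralSum v fun i => max (lam i) 1 - 1
  have hconj : sqB * S * sqB = spectralSum v lam⁻¹ := by
    rw [← inv_spectralSum horth fun i => (hlam i).ne', spectralSum, ← hdecomp, Matrix.mul_inv_rev,
      Matrix.mul_inv_rev, nonsing_inv_nonsing_inv _ ((isUnit_iff_isUnit_det _).mp hsqB.isUnit),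
      nonsing_inv_nonsing_inv _ ((isUnit_iff_isUnit_det _).mp hS.isUnit), mul_assoc]
  have hdiff : B' - B = sqB * M * sqB := by
    have hM : M = spectralSum v (fun i => max (lam i) 1) - 1 := by
      rw [← spectralSum_one horth, ← spectralSum_sub]
      rfl
    rw [hB', ← hsq, hM, mul_sub, sub_mul, mul_one]
    rfl
  calc (S * (B' - B)).trace = (M * (sqB * S * sqB)).trace := by
        rw [hdiff, ← mul_assoc, ← mul_assoc, trace_mul_cycle, trace_mul_comm]
        simp only [mul_assoc]
    _ = ∑ i, (max (lam i) 1 - 1) * (lam i)⁻¹ := by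
        rw [hconj, spectralSum_mul_spectralSum horth, trace_spectralSum horth]
        rfl
    _ = ∑ i, max (1 - 1 / lam i) 0 := Finset.sum_congr rfl fun i _ => max_sub_one_mul_inv (hlam i)

theorem stmt_5 {n : ℕ}
    (B S sqB : Matrix (Fin n) (Fin n) ℝ)
    (hB : B.PosDef) (hS : S.PosDef)
    (hsqB : sqB.PosDef) (hsq : sqB * sqB = B)
    (lam : Fin n → ℝ) (hlam : ∀ i, 0 < lam i)
    (v : Fin n → (Fin n → ℝ))
    (horth : ∀ i j, v i ⬝ᵥ v j = if i = j then (1 : ℝ) else 0)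
    (hdecomp : sqB⁻¹ * S⁻¹ * sqB⁻¹ = ∑ i, lam i • vecMulVec (v i) (v i))
    (B' : Matrix (Fin n) (Fin n) ℝ)
    (hB' : B' = sqB * (∑ i, max (lam i) 1 • vecMulVec (v i) (v i)) * sqB) :
    (S * (B' - B)).trace = ∑ i, max (1 - 1 / lam i) 0 :=
  stmt_5_general B S sqB hS hsqB hsq lam hlam v horth hdecomp B' hB'
end

section
/- Let B and Σ be n×n real symmetric positive definite matrices, let B^{1/2} denote the positive definite square root of B, and suppose B^{-1/2} Σ⁻¹ B^{-1/2} = Σ_{i=1}^{n} λᵢ vᵢvᵢᵀ, where λ₁,…,λₙ > 0 and v₁,…,vₙ is an orthonormal basis of ℝⁿ. Define B' = B^{1/2} (Σ_{i=1}^{n} max{λᵢ, 1} vᵢvᵢᵀ) B^{1/2}. Then tr(Σ(B' − B)) ≤ log det(B') − log det(B). -/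
/-!
Conjugating by `B^{1/2}` and rotating by the orthogonal matrix with rows `vᵢ` diagonalises
everything: `B^{1/2} Σ B^{1/2}` becomes `diag(λᵢ⁻¹)` and `B^{-1/2} B' B^{-1/2}` becomes
`diag(μᵢ)` with `μᵢ = max λᵢ 1`. The inequality then splits into the scalar inequalities
`λᵢ⁻¹ (μᵢ - 1) ≤ log μᵢ`, which for `λᵢ ≥ 1` is `1 - λᵢ⁻¹ ≤ log λᵢ` and otherwise reads `0 ≤ 0`.
-/

open Matrix

namespace Matrix

variable {ι m R : Type*} [Fintype ι] [DecidableEq ι]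

theorem sum_smul_vecMulVec_self_eq [CommSemiring R] (v : ι → m → R) (f : ι → R) :
    ∑ i, f i • vecMulVec (v i) (v i) = (of v)ᵀ * diagonal f * of v := by
  ext j k
  rw [mul_apply, sum_apply]
  simp only [mul_diagonal, smul_apply, vecMulVec_apply, transpose_apply, of_apply, smul_eq_mul]
  exact Finset.sum_congr rfl fun i _ => by ring

theorem of_mul_transpose_of_eq_one [CommSemiring R] {v : ι → ι → R}
    (hv : ∀ i j, v i ⬝ᵥ v j = if i = j then (1 : R) else 0) : of v * (of v)ᵀ = 1 := by
  ext i j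
  simpa [mul_apply, one_apply, dotProduct] using hv i j

section OrthogonalConj

variable [CommRing R] {Q : Matrix ι ι R}

theorem conj_diagonal_mul_conj_diagonal (hQ : Q * Qᵀ = 1) (f g : ι → R) :
    Qᵀ * diagonal f * Q * (Qᵀ * diagonal g * Q) = Qᵀ * diagonal (f * g) * Q := by
  simp only [Matrix.mul_assoc]
  rw [← Matrix.mul_assoc Q Qᵀ, hQ, Matrix.one_mul, ← Matrix.mul_assoc (diagonal f),
    diagonal_mul_diagonal]
  rfl

theorem conj_diagonal_sub (Q : Matrix ι ι R) (f g : ι → R) :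
    Qᵀ * diagonal (f - g) * Q = Qᵀ * diagonal f * Q - Qᵀ * diagonal g * Q := by
  rw [← Matrix.sub_mul, ← Matrix.mul_sub, diagonal_sub]
  rfl

theorem conj_diagonal_one (hQ : Q * Qᵀ = 1) : Qᵀ * diagonal 1 * Q = 1 := by
  rw [show diagonal (1 : ι → R) = 1 from diagonal_one, Matrix.mul_one, mul_eq_one_comm.mp hQ]

theorem trace_conj_diagonal (hQ : Q * Qᵀ = 1) (f : ι → R) :
    trace (Qᵀ * diagonal f * Q) = ∑ i, f i := by
  rw [trace_mul_cycle, hQ, Matrix.one_mul, trace_diagonal]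

theorem det_conj_diagonal (hQ : Q * Qᵀ = 1) (f : ι → R) :
    det (Qᵀ * diagonal f * Q) = ∏ i, f i := by
  have hdet : Q.det * Q.det = 1 := by simpa [det_mul, det_transpose] using congrArg det hQ
  rw [det_mul, det_mul, det_transpose, det_diagonal]
  linear_combination (∏ i, f i) * hdet

theorem inv_conj_diagonal {K : Type*} [Field K] {Q : Matrix ι ι K} (hQ : Q * Qᵀ = 1)
    {f : ι → K} (hf : ∀ i, f i ≠ 0) : (Qᵀ * diagonal f * Q)⁻¹ = Qᵀ * diagonal f⁻¹ * Q := by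
  refine inv_eq_right_inv ?_
  rw [conj_diagonal_mul_conj_diagonal hQ, ← conj_diagonal_one hQ]
  congr 3
  exact funext fun i => mul_inv_cancel₀ (hf i)

end OrthogonalConj

end Matrix

theorem inv_mul_max_sub_one_le_log_max (x : ℝ) : x⁻¹ * (max x 1 - 1) ≤ Real.log (max x 1) := by
  rcases le_or_gt 1 x with hx | hx
  · have hpos : 0 < x := one_pos.trans_le hx
    rw [max_eq_left hx, mul_sub, inv_mul_cancel₀ hpos.ne', mul_one]
    exact Real.one_sub_inv_le_log_of_pos hpos
  · simp [max_eq_right hx.le]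

theorem stmt_7 {n : ℕ}
    (B S sqB : Matrix (Fin n) (Fin n) ℝ)
    (hB : B.PosDef) (hS : S.PosDef)
    (hsqB : sqB.PosDef) (hsq : sqB * sqB = B)
    (lam : Fin n → ℝ) (hlam : ∀ i, 0 < lam i)
    (v : Fin n → (Fin n → ℝ))
    (horth : ∀ i j, v i ⬝ᵥ v j = if i = j then (1 : ℝ) else 0)
    (hdecomp : sqB⁻¹ * S⁻¹ * sqB⁻¹ = ∑ i, lam i • vecMulVec (v i) (v i))
    (B' : Matrix (Fin n) (Fin n) ℝ)
    (hB' : B' = sqB * (∑ i, max (lam i) 1 • vecMulVec (v i) (v i)) * sqB) :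
    (S * (B' - B)).trace ≤ Real.log B'.det - Real.log B.det := by
  rw [sum_smul_vecMulVec_self_eq] at hdecomp hB'
  set Q := of v
  set μ : Fin n → ℝ := fun i => max (lam i) 1
  have hQ : Q * Qᵀ = 1 := of_mul_transpose_of_eq_one horth
  have hS_conj : sqB * S * sqB = Qᵀ * diagonal lam⁻¹ * Q := by
    rw [← inv_conj_diagonal hQ fun i => (hlam i).ne', ← hdecomp, Matrix.mul_inv_rev,
      Matrix.mul_inv_rev, nonsing_inv_nonsing_inv _ hS.det_pos.ne'.isUnit,
      nonsing_inv_nonsing_inv _ hsqB.det_pos.ne'.isUnit, Matrix.mul_assoc]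
  have hdiff : B' - B = sqB * (Qᵀ * diagonal (μ - 1) * Q) * sqB := by
    rw [conj_diagonal_sub, conj_diagonal_one hQ, Matrix.mul_sub, Matrix.sub_mul, Matrix.mul_one,
      hB', hsq]
  have htrace : (S * (B' - B)).trace = ∑ i, (lam i)⁻¹ * (μ i - 1) := by
    rw [hdiff, ← Matrix.mul_assoc, ← Matrix.mul_assoc, trace_mul_cycle, ← Matrix.mul_assoc sqB S,
      hS_conj, conj_diagonal_mul_conj_diagonal hQ, trace_conj_diagonal hQ]
    rfl
  have hdet : B'.det = B.det * ∏ i, μ i := by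
    rw [hB', ← hsq, det_mul, det_mul _ sqB, det_mul, det_conj_diagonal hQ]
    ring
  have hμ : ∀ i, μ i ≠ 0 := fun i => (one_pos.trans_le (le_max_right _ _)).ne'
  rw [htrace, hdet, Real.log_mul hB.det_pos.ne' (Finset.prod_ne_zero_iff.mpr fun i _ => hμ i),
    Real.log_prod fun i _ => hμ i, add_sub_cancel_left]
  exact Finset.sum_le_sum fun i _ => inv_mul_max_sub_one_le_log_max (lam i)
end
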